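/- arXiv:1708.08102 — 4 statements merged into one kernel-verified Lean document; each statement's English description precedes it below -/
import Mathlib

section
/- Let p ≤ n be positive integers, let α ≥ 2 and c₀ > 0, and let w be a real random variable with E[w] = 0, E[w²] = 1, satisfying P(|w| ≥ t) ≥ c₀/t^α for all t ≥ 1. Let W = (w_{ij}), 1 ≤ i ≤ p, 1 ≤ j ≤ n, be a p × n random matrix whose entries are i.i.d. copies of w, and let X_i ∈ ℝⁿ denote the i-th row of W (so |X_i|² = Σ_{j=1}^n w_{ij}²). Then for every K ≥ 1, P( max_{1 ≤ i ≤ p} |X_i| ≥ √(Kn) ) ≥ min{ c₀ p / (4 n^{α/2 − 1} K^{α/2}), 1/2 }. -/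
open MeasureTheory ProbabilityTheory

/-!
If some entry satisfies `|w_ij| ≥ t := √(Kn)`, then so does the norm of its row. The `pn` entries
are independent and each exceeds `t` with probability at least `q := c₀ / t^α`, so
`P(max_i |X_i| ≥ t) ≥ 1 - (1 - q)^(pn) ≥ 1 - exp(-pnq) ≥ min(pnq/4, 1/2)`, and
`pnq = c₀ p / (n^(α/2-1) K^(α/2))`.
-/

lemma min_div_four_half_le_one_sub_exp_neg {x : ℝ} (hx : 0 ≤ x) :
    min (x / 4) (1 / 2) ≤ 1 - Real.exp (-x) := by
  rcases le_or_gt x 2 with hx2 | hx2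
  · have hexp : Real.exp (-x) ≤ 1 / (1 + x) := by
      rw [Real.exp_neg, inv_eq_one_div]
      exact one_div_le_one_div_of_le (by linarith) (by linarith [Real.add_one_le_exp x])
    have : 1 / (1 + x) ≤ 1 - x / 4 := by
      rw [div_le_iff₀ (by linarith)]; nlinarith
    linarith [min_le_left (x / 4) (1 / 2)]
  · have hexp : Real.exp (-x) ≤ 1 / 2 := by
      rw [Real.exp_neg, inv_eq_one_div]
      exact one_div_le_one_div_of_le (by norm_num) (by linarith [Real.add_one_le_exp x])
    linarith [min_le_right (x / 4) (1 / 2)]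

lemma min_mul_div_four_half_le_one_sub_pow (m : ℕ) {q : ℝ} (hq₀ : 0 ≤ q) (hq₁ : q ≤ 1) :
    min (m * q / 4) (1 / 2) ≤ 1 - (1 - q) ^ m := by
  have hpow : (1 - q) ^ m ≤ Real.exp (-(m * q)) :=
    calc (1 - q) ^ m ≤ Real.exp (-q) ^ m :=
          pow_le_pow_left₀ (by linarith) (Real.one_sub_le_exp_neg q) m
      _ = Real.exp (-(m * q)) := by rw [← Real.exp_nat_mul]; ring_nf
  linarith [min_div_four_half_le_one_sub_exp_neg (mul_nonneg m.cast_nonneg hq₀)]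

lemma abs_le_iSup_sqrt_sum_sq {ι κ : Type*} [Finite ι] [Fintype κ] (f : ι → κ → ℝ)
    (i : ι) (j : κ) : |f i j| ≤ ⨆ i, √(∑ j, f i j ^ 2) :=
  calc |f i j| = √(f i j ^ 2) := (Real.sqrt_sq_eq_abs _).symm
    _ ≤ √(∑ j, f i j ^ 2) := Real.sqrt_le_sqrt <|
        Finset.single_le_sum (f := fun j => f i j ^ 2) (fun _ _ => sq_nonneg _)
          (Finset.mem_univ j)
    _ ≤ ⨆ i, √(∑ j, f i j ^ 2) :=
        le_ciSup (f := fun i => √(∑ j, f i j ^ 2)) (Set.finite_range _).bddAbove i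

section

variable {Ω Ω' ι : Type*} [MeasurableSpace Ω] [MeasurableSpace Ω']
  {μ : Measure Ω} {ν : Measure Ω'}

lemma ProbabilityTheory.IdentDistrib.measure_abs_lt_le {X : Ω → ℝ} {w : Ω' → ℝ}
    [IsProbabilityMeasure ν] (h : IdentDistrib X w μ ν) {t : ℝ} {a : ENNReal}
    (htail : a ≤ ν {ω | t ≤ |w ω|}) :
    μ {ω | |X ω| < t} ≤ 1 - a := by
  have hB : MeasurableSet {x : ℝ | t ≤ |x|} := measurableSet_le measurable_const measurable_abs
  calc μ {ω | |X ω| < t} = μ (X ⁻¹' {x | t ≤ |x|}ᶜ) := by simp [Set.preimage, not_le]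
    _ = ν (w ⁻¹' {x | t ≤ |x|}ᶜ) := h.measure_mem_eq hB.compl
    _ = 1 - ν {ω | t ≤ |w ω|} :=
        prob_compl_eq_one_sub₀ (h.aemeasurable_snd.nullMeasurableSet_preimage hB)
    _ ≤ 1 - a := tsub_le_tsub_left htail 1

lemma one_sub_pow_le_measure_exists_le_abs [Fintype ι] [IsProbabilityMeasure μ]
    [IsProbabilityMeasure ν] {X : ι → Ω → ℝ} {w : Ω' → ℝ} (hindep : iIndepFun X μ)
    (hident : ∀ i, IdentDistrib (X i) w μ ν) {t : ℝ} {a : ENNReal}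
    (htail : a ≤ ν {ω | t ≤ |w ω|}) :
    1 - (1 - a) ^ Fintype.card ι ≤ μ {ω | ∃ i, t ≤ |X i ω|} := by
  have hcompl : {ω | ∃ i, t ≤ |X i ω|}ᶜ = ⋂ i, X i ⁻¹' {x | |x| < t} := by
    ext ω; simp
  have hnone : μ {ω | ∃ i, t ≤ |X i ω|}ᶜ ≤ (1 - a) ^ Fintype.card ι :=
    calc μ {ω | ∃ i, t ≤ |X i ω|}ᶜ = ∏ i, μ (X i ⁻¹' {x | |x| < t}) := by
          rw [hcompl, hindep.meas_iInter fun i =>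
            ⟨_, measurableSet_lt measurable_abs measurable_const, rfl⟩]
      _ ≤ ∏ _i : ι, (1 - a) :=
          Finset.prod_le_prod' fun i _ => (hident i).measure_abs_lt_le htail
      _ = (1 - a) ^ Fintype.card ι := by rw [Finset.prod_const, Finset.card_univ]
  rw [tsub_le_iff_right]
  calc 1 = μ Set.univ := measure_univ.symm
    _ ≤ μ {ω | ∃ i, t ≤ |X i ω|} + μ {ω | ∃ i, t ≤ |X i ω|}ᶜ :=
        measure_univ_le_add_compl _
    _ ≤ μ {ω | ∃ i, t ≤ |X i ω|} + (1 - a) ^ Fintype.card ι := add_le_add_right hnone _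

end

lemma div_rpow_half_sub_one_eq_div_sqrt_rpow (c y a : ℝ) {x K : ℝ} (hx : 0 < x) (hK : 0 < K) :
    c * y / (4 * x ^ (a / 2 - 1) * K ^ (a / 2)) = y * x * (c / √(K * x) ^ a) / 4 := by
  have hsqrt : √(K * x) ^ a = K ^ (a / 2) * (x ^ (a / 2 - 1) * x) := by
    rw [Real.sqrt_eq_rpow, ← Real.rpow_mul (by positivity), Real.mul_rpow hK.le hx.le,
      ← Real.rpow_add_one hx.ne']
    ring_nf
  have : 0 < x ^ (a / 2 - 1) := Real.rpow_pos_of_pos hx _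
  have : 0 < K ^ (a / 2) := Real.rpow_pos_of_pos hK _
  rw [hsqrt]
  field_simp

theorem stmt_0_general {Ω : Type*} [MeasureSpace Ω] [IsProbabilityMeasure (ℙ : Measure Ω)]
    (p n : ℕ) (hp : 0 < p) (hpn : p ≤ n)
    (α c₀ : ℝ) (hc₀ : 0 < c₀)
    (w : Ω → ℝ)
    (htail : ∀ t : ℝ, 1 ≤ t → ENNReal.ofReal (c₀ / t ^ α) ≤ ℙ {ω | t ≤ |w ω|})
    (W : Fin p → Fin n → Ω → ℝ)
    (hindep : iIndepFun (fun ij : Fin p × Fin n => W ij.1 ij.2) ℙ)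
    (hident : ∀ i j, IdentDistrib (W i j) w ℙ ℙ)
    (K : ℝ) (hK : 1 ≤ K) :
    ENNReal.ofReal (min (c₀ * p / (4 * (n : ℝ) ^ (α / 2 - 1) * K ^ (α / 2))) (1 / 2))
      ≤ ℙ {ω | Real.sqrt (K * n) ≤ ⨆ i, Real.sqrt (∑ j, (W i j ω) ^ 2)} := by
  have hn : (1 : ℝ) ≤ n := by exact_mod_cast hp.trans_le hpn
  set t := √(K * n)
  have ht : 1 ≤ t := Real.one_le_sqrt.mpr (by nlinarith)
  set q := c₀ / t ^ α
  have hq₀ : 0 ≤ q := by positivity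
  have hq₁ : q ≤ 1 := ENNReal.ofReal_le_one.mp ((htail t ht).trans prob_le_one)
  have hentry := one_sub_pow_le_measure_exists_le_abs hindep (fun ij => hident ij.1 ij.2)
    (htail t ht)
  rw [div_rpow_half_sub_one_eq_div_sqrt_rpow _ _ _ (by linarith) (by linarith)]
  calc ENNReal.ofReal (min (p * n * q / 4) (1 / 2))
      ≤ ENNReal.ofReal (1 - (1 - q) ^ (p * n)) := ENNReal.ofReal_le_ofReal <| by
        exact_mod_cast min_mul_div_four_half_le_one_sub_pow (p * n) hq₀ hq₁
    _ = 1 - (1 - ENNReal.ofReal q) ^ Fintype.card (Fin p × Fin n) := by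
        rw [ENNReal.ofReal_sub _ (pow_nonneg (by linarith) _), ENNReal.ofReal_pow (by linarith),
          ENNReal.ofReal_sub _ hq₀, ENNReal.ofReal_one, Fintype.card_prod, Fintype.card_fin,
          Fintype.card_fin]
    _ ≤ ℙ {ω | ∃ ij : Fin p × Fin n, t ≤ |W ij.1 ij.2 ω|} := hentry
    _ ≤ _ := measure_mono fun ω ⟨ij, hij⟩ =>
        hij.trans (abs_le_iSup_sqrt_sum_sq (fun i j => W i j ω) ij.1 ij.2)

/-- Let `p ≤ n` be positive integers, `α ≥ 2`, `c₀ > 0`, and let `w` be a real random variable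
with `E[w] = 0`, `E[w²] = 1`, satisfying `P(|w| ≥ t) ≥ c₀ / t^α` for all `t ≥ 1`.  Let
`W = (w_{ij})` be a `p × n` random matrix whose entries are i.i.d. copies of `w`, and let
`Xᵢ ∈ ℝⁿ` be the `i`-th row of `W` (so `|Xᵢ|² = Σ_j w_{ij}²`).  Then for every `K ≥ 1`,
`P(max_i |Xᵢ| ≥ √(Kn)) ≥ min{c₀ p / (4 n^(α/2 − 1) K^(α/2)), 1/2}`. -/
theorem stmt_0 {Ω : Type*} [MeasureSpace Ω] [IsProbabilityMeasure (ℙ : Measure Ω)]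
    (p n : ℕ) (hp : 0 < p) (hpn : p ≤ n)
    (α c₀ : ℝ) (hα : 2 ≤ α) (hc₀ : 0 < c₀)
    (w : Ω → ℝ) (hmean : ∫ ω, w ω = 0) (hvar : ∫ ω, (w ω) ^ 2 = 1)
    (htail : ∀ t : ℝ, 1 ≤ t → ENNReal.ofReal (c₀ / t ^ α) ≤ ℙ {ω | t ≤ |w ω|})
    (W : Fin p → Fin n → Ω → ℝ)
    (hindep : iIndepFun (fun ij : Fin p × Fin n => W ij.1 ij.2) ℙ)
    (hident : ∀ i j, IdentDistrib (W i j) w ℙ ℙ)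
    (K : ℝ) (hK : 1 ≤ K) :
    ENNReal.ofReal (min (c₀ * p / (4 * (n : ℝ) ^ (α / 2 - 1) * K ^ (α / 2))) (1 / 2))
      ≤ ℙ {ω | Real.sqrt (K * n) ≤ ⨆ i, Real.sqrt (∑ j, (W i j ω) ^ 2)} :=
  stmt_0_general p n hp hpn α c₀ hc₀ w htail W hindep hident K hK
end

section
/- Let p ≤ n be positive integers, let α ≥ 2 and c₀ > 0, and let w be a real random variable with E[w] = 0, E[w²] = 1, satisfying P(|w| ≥ t) ≥ c₀/t^α for all t ≥ 1. Let W = (w_{ij}) be a p × n random matrix whose entries are i.i.d. copies of w, and let Γ = (1/n) W Wᵀ be the sample covariance matrix. Then for every K ≥ 1, P( λ_max(Γ) ≥ K ) ≥ min{ c₀ p / (4 n^{α/2 − 1} K^{α/2}), 1/2 }, where λ_max(Γ) denotes the largest eigenvalue of the symmetric positive semidefinite matrix Γ. -/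
open MeasureTheory ProbabilityTheory Matrix

/-- The largest eigenvalue of a real (symmetric) matrix, defined as the supremum of its
spectrum.  For a real symmetric matrix the spectrum is exactly the (nonempty, finite) set of
its eigenvalues, so this is the largest eigenvalue. -/
noncomputable def lambdaMax {p : ℕ} (A : Matrix (Fin p) (Fin p) ℝ) : ℝ :=
  sSup (spectrum ℝ A)

/-!
If a single entry satisfies `|w_ij| ≥ √(nK)`, then the diagonal entry `Γ_ii ≥ w_ij² / n ≥ K`,
and `λ_max(Γ) ≥ Γ_ii`. The `pn` entries are independent and each is that large with probability
at least `q = c₀ (nK)^(-α/2)`, so this happens with probability at least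
`1 - (1 - q)^(pn) ≥ min (pnq/2, 1/2)`, and `pnq/2 = c₀ p / (2 n^(α/2-1) K^(α/2))`.
-/

open scoped MatrixOrder in
lemma Matrix.IsHermitian.diag_le_lambdaMax {m : ℕ} {A : Matrix (Fin m) (Fin m) ℝ}
    (hA : A.IsHermitian) (i : Fin m) : A i i ≤ lambdaMax A := by
  have hbdd : BddAbove (spectrum ℝ A) :=
    (hA.spectrum_real_eq_range_eigenvalues ▸ Set.finite_range _ : (spectrum ℝ A).Finite).bddAbove
  have hle : A ≤ algebraMap ℝ _ (lambdaMax A) :=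
    le_algebraMap_of_spectrum_le fun r hr => le_csSup hbdd hr
  simpa [sub_nonneg, algebraMap_matrix_apply] using (Matrix.le_iff.mp hle).diag_nonneg (i := i)

lemma smul_sq_le_lambdaMax_smul_mul_transpose {p n : ℕ} (M : Matrix (Fin p) (Fin n) ℝ)
    {c : ℝ} (hc : 0 ≤ c) (i : Fin p) (j : Fin n) :
    c * M i j ^ 2 ≤ lambdaMax (c • (M * Mᵀ)) := by
  have hherm : (c • (M * Mᵀ)).IsHermitian :=
    (isHermitian_mul_conjTranspose_self M).smul (IsSelfAdjoint.all c)
  calc c * M i j ^ 2 ≤ c * ∑ k, M i k ^ 2 :=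
        mul_le_mul_of_nonneg_left
          (Finset.single_le_sum (fun k _ => sq_nonneg (M i k)) (Finset.mem_univ j)) hc
    _ = (c • (M * Mᵀ)) i i := by simp [Matrix.mul_apply, sq]
    _ ≤ lambdaMax (c • (M * Mᵀ)) := hherm.diag_le_lambdaMax i

lemma le_lambdaMax_of_sqrt_le_abs {p n : ℕ} (M : Matrix (Fin p) (Fin n) ℝ) (hn : 0 < n)
    {K : ℝ} {i : Fin p} {j : Fin n} (h : √(n * K) ≤ |M i j|) :
    K ≤ lambdaMax ((1 / (n : ℝ)) • (M * Mᵀ)) := by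
  refine le_trans ?_ (smul_sq_le_lambdaMax_smul_mul_transpose M (by positivity) i j)
  have hsq : n * K ≤ M i j ^ 2 := sq_abs (M i j) ▸ (Real.sqrt_le_iff.mp h).2
  rw [one_div, inv_mul_eq_div, le_div_iff₀ (by positivity)]
  linarith

lemma ProbabilityTheory.iIndepFun.one_sub_one_sub_pow_le_measure_iUnion {Ω ι β : Type*}
    [MeasurableSpace Ω] [MeasurableSpace β] [Fintype ι] {μ : Measure Ω} [IsProbabilityMeasure μ]
    {X : ι → Ω → β}
    (hindep : iIndepFun X μ) (hX : ∀ i, AEMeasurable (X i) μ) {S : ι → Set β}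
    (hS : ∀ i, MeasurableSet (S i)) {r : ENNReal} (hr : ∀ i, r ≤ μ (X i ⁻¹' S i)) :
    1 - (1 - r) ^ Fintype.card ι ≤ μ (⋃ i, X i ⁻¹' S i) := by
  have hmiss : μ (⋂ i, X i ⁻¹' (S i)ᶜ) ≤ (1 - r) ^ Fintype.card ι := by
    rw [hindep.meas_iInter fun i => ⟨(S i)ᶜ, (hS i).compl, rfl⟩, ← Finset.card_univ,
      ← Finset.prod_const]
    refine Finset.prod_le_prod' fun i _ => ?_
    rw [Set.preimage_compl, prob_compl_eq_one_sub₀ ((hX i).nullMeasurable (hS i))]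
    exact tsub_le_tsub_left (hr i) 1
  calc 1 - (1 - r) ^ Fintype.card ι ≤ 1 - μ (⋂ i, X i ⁻¹' (S i)ᶜ) := tsub_le_tsub_left hmiss 1
    _ = 1 - μ (⋃ i, X i ⁻¹' S i)ᶜ := by simp only [Set.compl_iUnion, Set.preimage_compl]
    _ ≤ μ (⋃ i, X i ⁻¹' S i) := by
        rw [tsub_le_iff_right, ← measure_univ (μ := μ)]
        exact measure_univ_le_add_compl _

lemma ofReal_min_half_le_one_sub_one_sub_pow {q : ℝ} (hq0 : 0 ≤ q) (hq1 : q ≤ 1) (m : ℕ) :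
    ENNReal.ofReal (min (m * q / 2) (1 / 2)) ≤ 1 - (1 - ENNReal.ofReal q) ^ m := by
  rw [← ENNReal.ofReal_one, ← ENNReal.ofReal_sub _ hq0, ← ENNReal.ofReal_pow (by linarith),
    ← ENNReal.ofReal_sub _ (by positivity)]
  refine ENNReal.ofReal_le_ofReal ?_
  set x : ℝ := m * q
  have hx : 0 ≤ x := by positivity
  have hpow : (1 - q) ^ m ≤ (1 + x)⁻¹ :=
    calc (1 - q) ^ m ≤ Real.exp (-q) ^ m :=
          pow_le_pow_left₀ (by linarith) (by linarith [Real.add_one_le_exp (-q)]) m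
      _ = (Real.exp x)⁻¹ := by rw [← Real.exp_nat_mul, mul_neg, Real.exp_neg]
      _ ≤ (1 + x)⁻¹ := inv_anti₀ (by positivity) (by linarith [Real.add_one_le_exp x])
  have hmin : min (x / 2) (1 / 2) ≤ x / (1 + x) := by
    rcases le_total x 1 with h | h
    · exact (min_le_left _ _).trans (div_le_div_of_nonneg_left hx (by positivity) (by linarith))
    · exact (min_le_right _ _).trans (by rw [le_div_iff₀ (by positivity)]; linarith)
  calc min (x / 2) (1 / 2) ≤ x / (1 + x) := hmin
    _ = 1 - (1 + x)⁻¹ := by field_simp; ring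
    _ ≤ 1 - (1 - q) ^ m := by linarith

lemma sqrt_mul_rpow_eq {n K : ℝ} (hn : 0 < n) (hK : 0 ≤ K) (α : ℝ) :
    √(n * K) ^ α = n * (n ^ (α / 2 - 1) * K ^ (α / 2)) :=
  calc √(n * K) ^ α = n ^ (1 + (α / 2 - 1)) * K ^ (α / 2) := by
        rw [Real.sqrt_eq_rpow, ← Real.rpow_mul (by positivity), Real.mul_rpow hn.le hK]
        ring_nf
    _ = n * (n ^ (α / 2 - 1) * K ^ (α / 2)) := by rw [Real.rpow_add hn, Real.rpow_one]; ring

lemma div_le_mul_div_sqrt_mul_rpow {p n K c : ℝ} (hp : 0 ≤ p) (hn : 0 < n) (hK : 0 < K)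
    (hc : 0 ≤ c) (α : ℝ) :
    c * p / (4 * n ^ (α / 2 - 1) * K ^ (α / 2)) ≤ p * n * (c / √(n * K) ^ α) / 2 := by
  have hA : 0 < n ^ (α / 2 - 1) * K ^ (α / 2) := by positivity
  have hrhs :
      p * n * (c / √(n * K) ^ α) / 2 = c * p / (2 * (n ^ (α / 2 - 1) * K ^ (α / 2))) := by
    rw [sqrt_mul_rpow_eq hn hK.le α]
    field_simp
  rw [hrhs, mul_assoc]
  gcongr
  norm_num

theorem stmt_1_general {Ω : Type*} [MeasureSpace Ω] [IsProbabilityMeasure (ℙ : Measure Ω)]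
    (p n : ℕ) (hp : 0 < p) (hpn : p ≤ n)
    (α c₀ : ℝ) (hc₀ : 0 < c₀)
    (w : Ω → ℝ)
    (htail : ∀ t : ℝ, 1 ≤ t → ENNReal.ofReal (c₀ / t ^ α) ≤ ℙ {ω | t ≤ |w ω|})
    (W : Fin p → Fin n → Ω → ℝ)
    (hindep : iIndepFun (fun ij : Fin p × Fin n => W ij.1 ij.2) ℙ)
    (hident : ∀ i j, IdentDistrib (W i j) w ℙ ℙ)
    (K : ℝ) (hK : 1 ≤ K) :
    ENNReal.ofReal (min (c₀ * p / (4 * (n : ℝ) ^ (α / 2 - 1) * K ^ (α / 2))) (1 / 2))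
      ≤ ℙ {ω | K ≤ lambdaMax ((1 / (n : ℝ)) •
            (Matrix.of (fun i j => W i j ω) * (Matrix.of (fun i j => W i j ω))ᵀ))} := by
  have hn : 0 < n := hp.trans_le hpn
  set t := √(n * K)
  have ht : 1 ≤ t :=
    Real.one_le_sqrt.mpr (one_le_mul_of_one_le_of_one_le (by exact_mod_cast hn) hK)
  have hS : MeasurableSet {x : ℝ | t ≤ |x|} := measurableSet_le measurable_const measurable_abs
  have hq : ENNReal.ofReal (c₀ / t ^ α) ≤ ℙ {ω | t ≤ |w ω|} := htail t ht
  have hlarge : 1 - (1 - ENNReal.ofReal (c₀ / t ^ α)) ^ (p * n)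
      ≤ ℙ (⋃ ij : Fin p × Fin n, W ij.1 ij.2 ⁻¹' {x | t ≤ |x|}) := by
    simpa using hindep.one_sub_one_sub_pow_le_measure_iUnion
      (fun ij => (hident ij.1 ij.2).aemeasurable_fst) (fun _ => hS)
      (fun ij => ((hident ij.1 ij.2).measure_mem_eq hS).symm ▸ hq)
  have hsub : (⋃ ij : Fin p × Fin n, W ij.1 ij.2 ⁻¹' {x | t ≤ |x|}) ⊆ {ω | K ≤ lambdaMax
      ((1 / (n : ℝ)) • (Matrix.of (fun i j => W i j ω) * (Matrix.of (fun i j => W i j ω))ᵀ))} := by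
    rintro ω ⟨_, ⟨⟨i, j⟩, rfl⟩, hij : t ≤ |W i j ω|⟩
    exact le_lambdaMax_of_sqrt_le_abs _ hn hij
  calc ENNReal.ofReal (min (c₀ * p / (4 * (n : ℝ) ^ (α / 2 - 1) * K ^ (α / 2))) (1 / 2))
      ≤ ENNReal.ofReal (min ((p * n : ℕ) * (c₀ / t ^ α) / 2) (1 / 2)) := by
        refine ENNReal.ofReal_le_ofReal (min_le_min_right _ ?_)
        push_cast
        exact div_le_mul_div_sqrt_mul_rpow (Nat.cast_nonneg p) (by positivity) (by positivity)
          hc₀.le α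
    _ ≤ 1 - (1 - ENNReal.ofReal (c₀ / t ^ α)) ^ (p * n) :=
        ofReal_min_half_le_one_sub_one_sub_pow (by positivity)
          (ENNReal.ofReal_le_one.mp (hq.trans prob_le_one)) _
    _ ≤ _ := hlarge.trans (measure_mono hsub)

/-- Let `p ≤ n` be positive integers, `α ≥ 2`, `c₀ > 0`, and let `w` be a real random variable
with `E[w] = 0`, `E[w²] = 1`, satisfying `P(|w| ≥ t) ≥ c₀ / t^α` for all `t ≥ 1`.  Let
`W = (w_{ij})` be a `p × n` random matrix with i.i.d. entries distributed as `w`, and let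
`Γ = (1/n) W Wᵀ` be the sample covariance matrix.  Then for every `K ≥ 1`,
`P(λ_max(Γ) ≥ K) ≥ min{c₀ p / (4 n^(α/2 − 1) K^(α/2)), 1/2}`. -/
theorem stmt_1 {Ω : Type*} [MeasureSpace Ω] [IsProbabilityMeasure (ℙ : Measure Ω)]
    (p n : ℕ) (hp : 0 < p) (hpn : p ≤ n)
    (α c₀ : ℝ) (hα : 2 ≤ α) (hc₀ : 0 < c₀)
    (w : Ω → ℝ) (hmean : ∫ ω, w ω = 0) (hvar : ∫ ω, (w ω) ^ 2 = 1)
    (htail : ∀ t : ℝ, 1 ≤ t → ENNReal.ofReal (c₀ / t ^ α) ≤ ℙ {ω | t ≤ |w ω|})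
    (W : Fin p → Fin n → Ω → ℝ)
    (hindep : iIndepFun (fun ij : Fin p × Fin n => W ij.1 ij.2) ℙ)
    (hident : ∀ i j, IdentDistrib (W i j) w ℙ ℙ)
    (K : ℝ) (hK : 1 ≤ K) :
    ENNReal.ofReal (min (c₀ * p / (4 * (n : ℝ) ^ (α / 2 - 1) * K ^ (α / 2))) (1 / 2))
      ≤ ℙ {ω | K ≤ lambdaMax ((1 / (n : ℝ)) •
            (Matrix.of (fun i j => W i j ω) * (Matrix.of (fun i j => W i j ω))ᵀ))} :=
  stmt_1_general p n hp hpn α c₀ hc₀ w htail W hindep hident K hK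
end

section
/- Let n ≥ 1 and let w₁, …, w_n be i.i.d. real random variables, each distributed as a random variable w with E[w] = 0 and E[w²] = 1. Then for every K ≥ 1, P( (1/n) Σ_{j=1}^n w_j² ≥ K ) ≥ (n/2) · P( w² ≥ nK ). -/
open MeasureTheory ProbabilityTheory

/-!
Let `p = P(w² ≥ nK)`. Chebyshev gives `nKp ≤ E[w²] = 1`, so `np ≤ 1`. The target event contains
the union of the independent events `{w_j² ≥ nK}`, whose probability is `1 - (1 - p)ⁿ`, and
`1 - (1 - p)ⁿ ≥ np / (1 + np) ≥ np / 2` because `(1 - p)ⁿ (1 + np) ≤ (1 - p)ⁿ (1 + p)ⁿ ≤ 1`.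
-/

lemma mul_div_two_le_one_sub_one_sub_pow {p : ℝ} (hp0 : 0 ≤ p) (hp1 : p ≤ 1) {n : ℕ}
    (hnp : n * p ≤ 1) : n * p / 2 ≤ 1 - (1 - p) ^ n := by
  have key : (1 - p) ^ n * (1 + n * p) ≤ 1 :=
    calc (1 - p) ^ n * (1 + n * p)
        ≤ (1 - p) ^ n * (1 + p) ^ n :=
          mul_le_mul_of_nonneg_left (one_add_mul_le_pow (by linarith) n)
            (pow_nonneg (by linarith) n)
      _ = (1 - p ^ 2) ^ n := by rw [← mul_pow]; ring
      _ ≤ 1 := pow_le_one₀ (by nlinarith) (by nlinarith)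
  have hpow_nonneg : 0 ≤ (1 - p) ^ n := pow_nonneg (by linarith) n
  nlinarith [mul_nonneg hp0 (Nat.cast_nonneg n : (0:ℝ) ≤ n)]

section

variable {Ω β ι : Type*} [MeasurableSpace Ω] [MeasurableSpace β] [Fintype ι]
  {μ : Measure Ω} [IsProbabilityMeasure μ]

lemma ProbabilityTheory.iIndepFun.measureReal_iUnion_preimage_of_identDistrib
    {X : ι → Ω → β} {Y : Ω → β} (hindep : iIndepFun X μ)
    (hident : ∀ i, IdentDistrib (X i) Y μ μ) {S : Set β} (hS : MeasurableSet S) :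
    μ.real (⋃ i, X i ⁻¹' S) = 1 - (1 - μ.real (Y ⁻¹' S)) ^ Fintype.card ι := by
  have hnull : ∀ i, NullMeasurableSet (X i ⁻¹' S) μ :=
    fun i => (hident i).aemeasurable_fst.nullMeasurableSet_preimage hS
  have hinter : μ.real (⋂ i, X i ⁻¹' Sᶜ) = ∏ i, μ.real (X i ⁻¹' Sᶜ) := by
    simpa [measureReal_def, ENNReal.toReal_prod] using
      congrArg ENNReal.toReal <| hindep.measure_inter_preimage_eq_mul Finset.univ
        (sets := fun _ => Sᶜ) fun _ _ => hS.compl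
  have hcompl : μ.real (⋂ i, X i ⁻¹' Sᶜ) = 1 - μ.real (⋃ i, X i ⁻¹' S) := by
    rw [← probReal_compl_eq_one_sub₀ (.iUnion hnull), Set.compl_iUnion]
    rfl
  have hprod : ∏ i, μ.real (X i ⁻¹' Sᶜ) = (1 - μ.real (Y ⁻¹' S)) ^ Fintype.card ι := by
    simp only [Set.preimage_compl, probReal_compl_eq_one_sub₀ (hnull _), measureReal_def,
      (hident _).measure_mem_eq hS, Finset.prod_const, Finset.card_univ]
  linarith

end

theorem stmt_4_general {Ω : Type*} [MeasureSpace Ω] [IsProbabilityMeasure (ℙ : Measure Ω)]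
    (n : ℕ)
    (w : Ω → ℝ) (hvar : ∫ ω, (w ω) ^ 2 = 1)
    (ws : Fin n → Ω → ℝ)
    (hindep : iIndepFun ws ℙ)
    (hident : ∀ j, IdentDistrib (ws j) w ℙ ℙ)
    (K : ℝ) (hK : 1 ≤ K) :
    ENNReal.ofReal ((n : ℝ) / 2) * ℙ {ω | (n : ℝ) * K ≤ (w ω) ^ 2}
      ≤ ℙ {ω | K ≤ (1 / (n : ℝ)) * ∑ j, (ws j ω) ^ 2} := by
  set p := (ℙ : Measure Ω).real {ω | (n : ℝ) * K ≤ (w ω) ^ 2}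
  have hp0 : 0 ≤ p := measureReal_nonneg
  have hmarkov : n * K * p ≤ 1 := hvar ▸ mul_meas_ge_le_integral_of_nonneg
    (.of_forall fun ω => sq_nonneg (w ω)) (.of_integral_ne_zero (by simp [hvar])) _
  have hnp : n * p ≤ 1 := by nlinarith
  have hunion : (ℙ : Measure Ω).real (⋃ j, (fun ω => ws j ω ^ 2) ⁻¹' Set.Ici (n * K))
      = 1 - (1 - p) ^ n := by
    have := (hindep.comp (fun _ x => x ^ 2) fun _ => measurable_id.pow_const 2)
      |>.measureReal_iUnion_preimage_of_identDistrib (Y := fun ω => w ω ^ 2)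
        (fun j => (hident j).comp (measurable_id.pow_const 2)) (measurableSet_Ici (a := n * K))
    rwa [Fintype.card_fin] at this
  have hsub : ⋃ j, (fun ω => ws j ω ^ 2) ⁻¹' Set.Ici (n * K)
      ⊆ {ω | K ≤ (1 / (n : ℝ)) * ∑ j, (ws j ω) ^ 2} := by
    simp only [Set.iUnion_subset_iff]
    intro j ω (hj : n * K ≤ ws j ω ^ 2)
    have hn : (0 : ℝ) < n := by exact_mod_cast j.pos
    have := Finset.single_le_sum (fun i _ => sq_nonneg (ws i ω)) (Finset.mem_univ j)
    show K ≤ _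
    rw [one_div_mul_eq_div, le_div_iff₀ hn]
    linarith
  calc ENNReal.ofReal ((n : ℝ) / 2) * ℙ {ω | (n : ℝ) * K ≤ (w ω) ^ 2}
      = ENNReal.ofReal (n * p / 2) := by
        rw [← ofReal_measureReal, ← ENNReal.ofReal_mul (by positivity), div_mul_eq_mul_div]
    _ ≤ ENNReal.ofReal ((ℙ : Measure Ω).real (⋃ j, (fun ω => ws j ω ^ 2) ⁻¹' Set.Ici (n * K))) :=
        ENNReal.ofReal_le_ofReal
          (hunion ▸ mul_div_two_le_one_sub_one_sub_pow hp0 measureReal_le_one hnp)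
    _ ≤ ℙ {ω | K ≤ (1 / (n : ℝ)) * ∑ j, (ws j ω) ^ 2} := by
        rw [ofReal_measureReal]; exact measure_mono hsub

/-- Let `w₁, …, w_n` (`n ≥ 1`) be i.i.d. real random variables, each distributed as a random
variable `w` with `E[w] = 0` and `E[w²] = 1`.  Then for every `K ≥ 1`,
`P((1/n) Σ w_j² ≥ K) ≥ (n/2) · P(w² ≥ nK)`. -/
theorem stmt_4 {Ω : Type*} [MeasureSpace Ω] [IsProbabilityMeasure (ℙ : Measure Ω)]
    (n : ℕ) (hn : 1 ≤ n)
    (w : Ω → ℝ) (hmean : ∫ ω, w ω = 0) (hvar : ∫ ω, (w ω) ^ 2 = 1)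
    (ws : Fin n → Ω → ℝ)
    (hindep : iIndepFun ws ℙ)
    (hident : ∀ j, IdentDistrib (ws j) w ℙ ℙ)
    (K : ℝ) (hK : 1 ≤ K) :
    ENNReal.ofReal ((n : ℝ) / 2) * ℙ {ω | (n : ℝ) * K ≤ (w ω) ^ 2}
      ≤ ℙ {ω | K ≤ (1 / (n : ℝ)) * ∑ j, (ws j ω) ^ 2} :=
  stmt_4_general n w hvar ws hindep hident K hK
end

section
/- Let p ≤ n be positive integers and let w be a real random variable with E[w] = 0 and E[w²] = 1. Let W = (w_{ij}), 1 ≤ i ≤ p, 1 ≤ j ≤ n, be a p × n random matrix whose entries are i.i.d. copies of w, and let X_i ∈ ℝⁿ denote the i-th row of W. Then for every K ≥ 1, P( max_{1 ≤ i ≤ p} |X_i| ≥ √(Kn) ) ≥ 1 − (1 − (n/2) P(w² ≥ nK))^p. -/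
/-!
Let `q = P(w² ≥ nK)`. By Markov's inequality `nKq ≤ E[w²] = 1`, so `nq ≤ 1`. If some entry
satisfies `w_{ij}² ≥ nK` then already the row `X_i` has `|X_i| ≥ √(Kn)`; by independence no entry
does so with probability `(1 - q)^{pn}`. Finally `(1 - q)^n ≤ 1/(1 + nq) ≤ 1 - nq/2` for `nq ≤ 1`.
-/

open MeasureTheory ProbabilityTheory

theorem one_sub_pow_le_one_sub_div_two_mul {q : ℝ} (n : ℕ) (hq₀ : 0 ≤ q) (hq₁ : q ≤ 1)
    (hnq : n * q ≤ 1) : (1 - q) ^ n ≤ 1 - n / 2 * q := by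
  have hprod : (1 - q) ^ n * (1 + n * q) ≤ 1 :=
    calc (1 - q) ^ n * (1 + n * q) ≤ (1 - q) ^ n * (1 + q) ^ n := by
          gcongr
          exact one_add_mul_le_pow (by linarith) n
      _ = (1 - q ^ 2) ^ n := by rw [← mul_pow]; ring
      _ ≤ 1 := pow_le_one₀ (by nlinarith) (by nlinarith)
  have : 0 ≤ n * q := by positivity
  nlinarith [pow_nonneg (sub_nonneg.2 hq₁) n]

theorem sqrt_le_iSup_sqrt_sum_sq {ι κ : Type*} [Finite ι] [Fintype κ] {a : ι → κ → ℝ}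
    {c : ℝ} {i : ι} {j : κ} (h : c ≤ a i j ^ 2) : √c ≤ ⨆ i, √(∑ j, a i j ^ 2) :=
  calc √c ≤ √(∑ j, a i j ^ 2) :=
        Real.sqrt_le_sqrt (h.trans (Finset.single_le_sum (fun j _ => sq_nonneg (a i j))
          (Finset.mem_univ j)))
    _ ≤ _ := le_ciSup (f := fun i => √(∑ j, a i j ^ 2)) (Set.finite_range _).bddAbove i

theorem ProbabilityTheory.iIndepFun.measureReal_iInter_preimage_eq_pow {Ω β ι : Type*}
    [MeasurableSpace Ω] [MeasurableSpace β] [Fintype ι] {μ : Measure Ω} {X : ι → Ω → β}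
    {Y : Ω → β} (hindep : iIndepFun X μ) (hident : ∀ i, IdentDistrib (X i) Y μ μ) {t : Set β}
    (ht : MeasurableSet t) : μ.real (⋂ i, X i ⁻¹' t) = μ.real (Y ⁻¹' t) ^ Fintype.card ι := by
  rw [measureReal_def, hindep.meas_iInter fun i => ⟨t, ht, rfl⟩]
  simp only [fun i => (hident i).measure_mem_eq ht, Finset.prod_const, Finset.card_univ,
    ENNReal.toReal_pow, measureReal_def]

theorem stmt_5_general {Ω : Type*} [MeasureSpace Ω] [IsProbabilityMeasure (ℙ : Measure Ω)]
    (p n : ℕ)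
    (w : Ω → ℝ) (hvar : ∫ ω, (w ω) ^ 2 = 1)
    (W : Fin p → Fin n → Ω → ℝ)
    (hindep : iIndepFun (fun ij : Fin p × Fin n => W ij.1 ij.2) ℙ)
    (hident : ∀ i j, IdentDistrib (W i j) w ℙ ℙ)
    (K : ℝ) (hK : 1 ≤ K) :
    ENNReal.ofReal
        (1 - (1 - (n : ℝ) / 2 * (ℙ {ω | (n : ℝ) * K ≤ (w ω) ^ 2}).toReal) ^ p)
      ≤ ℙ {ω | Real.sqrt (K * n) ≤ ⨆ i, Real.sqrt (∑ j, (W i j ω) ^ 2)} := by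
  set q : ℝ := (ℙ : Measure Ω).real {ω | (n : ℝ) * K ≤ w ω ^ 2}
  have hsq_int : Integrable (fun ω => w ω ^ 2) := .of_integral_ne_zero (by simp [hvar])
  have hq₀ : 0 ≤ q := measureReal_nonneg
  have hq₁ : q ≤ 1 := measureReal_le_one
  have hnq : (n : ℝ) * q ≤ 1 := by
    have hmarkov := mul_meas_ge_le_integral_of_nonneg (ae_of_all _ fun ω => sq_nonneg (w ω))
      hsq_int (n * K)
    rw [hvar] at hmarkov
    nlinarith
  set t := {x : ℝ | x ^ 2 < n * K}
  have ht : MeasurableSet t := measurableSet_lt (by fun_prop) measurable_const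
  have hwt : (ℙ : Measure Ω).real (w ⁻¹' t) = 1 - q := by
    have : w ⁻¹' t = {ω | (n : ℝ) * K ≤ w ω ^ 2}ᶜ := by ext; simp [t]
    rw [this]
    exact probReal_compl_eq_one_sub₀ (hsq_int.aemeasurable.nullMeasurable measurableSet_Ici)
  set G := ⋂ ij : Fin p × Fin n, W ij.1 ij.2 ⁻¹' t
  have hG : (ℙ : Measure Ω).real G = (1 - q) ^ (p * n) := by
    rw [hindep.measureReal_iInter_preimage_eq_pow (fun ij => hident ij.1 ij.2) ht, hwt,
      Fintype.card_prod, Fintype.card_fin, Fintype.card_fin]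
  have hG_null : NullMeasurableSet G :=
    .iInter fun ij => (hident ij.1 ij.2).aemeasurable_fst.nullMeasurable ht
  have hGc_sub : Gᶜ ⊆ {ω | √(K * n) ≤ ⨆ i, √(∑ j, W i j ω ^ 2)} := by
    intro ω hω
    simp only [G, t, Set.mem_compl_iff, Set.mem_iInter, Set.mem_preimage, Set.mem_ofPred_eq,
      not_forall, not_lt] at hω
    obtain ⟨⟨i, j⟩, hij⟩ := hω
    exact sqrt_le_iSup_sqrt_sum_sq (a := fun i j => W i j ω) (by linarith)
  rw [ENNReal.ofReal_le_iff_le_toReal (measure_ne_top _ _), ← measureReal_def, ← measureReal_def]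
  calc 1 - (1 - (n : ℝ) / 2 * q) ^ p ≤ 1 - ((1 - q) ^ n) ^ p := by
        gcongr
        exact one_sub_pow_le_one_sub_div_two_mul n hq₀ hq₁ hnq
    _ = (ℙ : Measure Ω).real Gᶜ := by rw [probReal_compl_eq_one_sub₀ hG_null, hG, pow_mul']
    _ ≤ _ := measureReal_mono hGc_sub

/-- Let `p ≤ n` be positive integers and `w` a real random variable with `E[w] = 0`,
`E[w²] = 1`.  Let `W = (w_{ij})` be a `p × n` random matrix with i.i.d. entries distributed
as `w`, and let `Xᵢ` be the `i`-th row of `W`.  Then for every `K ≥ 1`,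
`P(max_i |Xᵢ| ≥ √(Kn)) ≥ 1 − (1 − (n/2) P(w² ≥ nK))^p`. -/
theorem stmt_5 {Ω : Type*} [MeasureSpace Ω] [IsProbabilityMeasure (ℙ : Measure Ω)]
    (p n : ℕ) (hp : 0 < p) (hpn : p ≤ n)
    (w : Ω → ℝ) (hmean : ∫ ω, w ω = 0) (hvar : ∫ ω, (w ω) ^ 2 = 1)
    (W : Fin p → Fin n → Ω → ℝ)
    (hindep : iIndepFun (fun ij : Fin p × Fin n => W ij.1 ij.2) ℙ)
    (hident : ∀ i j, IdentDistrib (W i j) w ℙ ℙ)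
    (K : ℝ) (hK : 1 ≤ K) :
    ENNReal.ofReal
        (1 - (1 - (n : ℝ) / 2 * (ℙ {ω | (n : ℝ) * K ≤ (w ω) ^ 2}).toReal) ^ p)
      ≤ ℙ {ω | Real.sqrt (K * n) ≤ ⨆ i, Real.sqrt (∑ j, (W i j ω) ^ 2)} :=
  stmt_5_general p n w hvar W hindep hident K hK
end
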